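/- arXiv:1208.5980 — 2 statements merged into one kernel-verified Lean document; each statement's English description precedes it below -/
import Mathlib

section
/- Every data language definable in two-variable first-order logic FO²(∼,<) over data strings is definable in FO²(∼,<,+1), but the converse fails: the successor relation is not expressible in FO²(∼,<); hence FO²(∼,<) ⊊ FO²(∼,<,+1). -/
/-- Syntax of first-order logic over data strings with label predicates,
position equality, data equality `∼`, order `<` and successor `+1`. -/
inductive FO (L : Type) : Type
  | lab : L → ℕ → FO L          -- `a(x)`
  | eq : ℕ → ℕ → FO L           -- `x = y`
  | dataEq : ℕ → ℕ → FO L       -- `x ∼ y`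
  | lt : ℕ → ℕ → FO L           -- `x < y`
  | succ : ℕ → ℕ → FO L         -- `x = y + 1`
  | exist : ℕ → FO L → FO L     -- `∃ x. φ`
  | or : FO L → FO L → FO L
  | not : FO L → FO L

namespace FO

variable {L D : Type}

/-- Satisfaction of a formula in a data string `w : List (L × D)` under a
valuation of variables as positions of `w`. -/
def Sat (w : List (L × D)) : FO L → (ℕ → ℕ) → Prop
  | lab a x, v => ∃ h : v x < w.length, (w.get ⟨v x, h⟩).1 = a
  | eq x y, v => v x = v y
  | dataEq x y, v => ∃ (hx : v x < w.length) (hy : v y < w.length),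
      (w.get ⟨v x, hx⟩).2 = (w.get ⟨v y, hy⟩).2
  | lt x y, v => v x < v y
  | succ x y, v => v x = v y + 1
  | exist n φ, v => ∃ p, p < w.length ∧ Sat w φ (Function.update v n p)
  | or φ ψ, v => Sat w φ v ∨ Sat w ψ v
  | not φ, v => ¬ Sat w φ v

/-- The data language defined by a formula (over data domain `D`). -/
def Lang (D : Type) (φ : FO L) : Set (List (L × D)) := {w | Sat w φ fun _ => 0}

def and (φ ψ : FO L) : FO L := not (or (not φ) (not ψ))

def imp (φ ψ : FO L) : FO L := or (not φ) ψ

def all (n : ℕ) (φ : FO L) : FO L := not (exist n (not φ))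

/-- All variables (free or bound) of the formula have index `< n`:
the formula is in the `n`-variable fragment. -/
def VarsLt (n : ℕ) : FO L → Prop
  | lab _ x => x < n
  | eq x y => x < n ∧ y < n
  | dataEq x y => x < n ∧ y < n
  | lt x y => x < n ∧ y < n
  | succ x y => x < n ∧ y < n
  | exist m φ => m < n ∧ VarsLt n φ
  | or φ ψ => VarsLt n φ ∧ VarsLt n ψ
  | not φ => VarsLt n φ

/-- The formula does not use the successor predicate `+1`. -/
def NoSucc : FO L → Prop
  | succ _ _ => False
  | exist _ φ => NoSucc φ
  | or φ ψ => NoSucc φ ∧ NoSucc ψ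
  | not φ => NoSucc φ
  | _ => True

end FO

/-! With `+1` one can say that two adjacent positions carry the same datum; `FO²(∼,<)` cannot.
Given a formula of quantifier rank `k`, let `B` be the string of length `16 (k + 1)` with data
classes `{4b, 4b + 2}`, `{4b + 1, 4b + 3}`, and `A` the same string with its middle block
`[x, x + 4)`, `x = 8 (k + 1)`, re-paired as `{x, x + 1}`, `{x + 2, x + 3}`. Only `A` has adjacent
equal data, yet Duplicator survives `k` rounds of the two-pebble game on `A` and `B`. With `r`
rounds to go she keeps each pair of corresponding pebbles either on one position outside the
block or both at distance at least `8 r` from the ends, always with their class partners on the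
same side, and the two pairs in the same order and data-equality type. A pebble placed near an
end, or outside the block while the other pebbles coincide, is copied; any other is answered a
few steps from the other pebble (or from the block) on the correct side, at a position whose
partner lies in the required direction, which any four consecutive positions offer. -/

namespace FO

variable {L D : Type}

def qrank : FO L → ℕ
  | exist _ φ => φ.qrank + 1
  | or φ ψ => max φ.qrank ψ.qrank
  | not φ => φ.qrank
  | _ => 0

def IsAtom : FO L → Prop
  | exist _ _ | or _ _ | not _ => False
  | _ => True

/-- `G k v₁ v₂`: with the two pebbles on `v₁ 0, v₁ 1` in `w₁` and on `v₂ 0, v₂ 1` in `w₂`,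
Duplicator survives `k` more rounds of the Ehrenfeucht–Fraïssé game for `FO²(∼,<)`. -/
structure TwoPebbleStrategy (w₁ w₂ : List (L × D)) (G : ℕ → (ℕ → ℕ) → (ℕ → ℕ) → Prop) :
    Prop where
  sat_atom_iff : ∀ {k v₁ v₂}, G k v₁ v₂ → ∀ {φ : FO L}, φ.IsAtom → φ.VarsLt 2 → φ.NoSucc →
    (Sat w₁ φ v₁ ↔ Sat w₂ φ v₂)
  forth : ∀ {k v₁ v₂}, G (k + 1) v₁ v₂ → ∀ i < 2, ∀ p < w₁.length,
    ∃ q < w₂.length, G k (Function.update v₁ i p) (Function.update v₂ i q)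
  back : ∀ {k v₁ v₂}, G (k + 1) v₁ v₂ → ∀ i < 2, ∀ q < w₂.length,
    ∃ p < w₁.length, G k (Function.update v₁ i p) (Function.update v₂ i q)

theorem TwoPebbleStrategy.sat_iff {w₁ w₂ : List (L × D)} {G : ℕ → (ℕ → ℕ) → (ℕ → ℕ) → Prop}
    (hG : TwoPebbleStrategy w₁ w₂ G) {φ : FO L} (hφ : φ.VarsLt 2) (hs : φ.NoSucc) {k : ℕ}
    {v₁ v₂ : ℕ → ℕ} (hk : φ.qrank ≤ k) (h : G k v₁ v₂) : Sat w₁ φ v₁ ↔ Sat w₂ φ v₂ := by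
  induction φ generalizing k v₁ v₂ with
  | exist n φ ih =>
    obtain ⟨hn, hφ⟩ := hφ
    have hk' : φ.qrank + 1 ≤ k := hk
    obtain ⟨k, rfl⟩ : ∃ k', k = k' + 1 := ⟨k - 1, by omega⟩
    replace hk : φ.qrank ≤ k := by omega
    constructor
    · rintro ⟨p, hp, hsat⟩
      obtain ⟨q, hq, h'⟩ := hG.forth h n hn p hp
      exact ⟨q, hq, (ih hφ hs hk h').1 hsat⟩
    · rintro ⟨q, hq, hsat⟩
      obtain ⟨p, hp, h'⟩ := hG.back h n hn q hq
      exact ⟨p, hp, (ih hφ hs hk h').2 hsat⟩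
  | or φ ψ ihφ ihψ =>
    exact or_congr (ihφ hφ.1 hs.1 (le_of_max_le_left hk) h)
      (ihψ hφ.2 hs.2 (le_of_max_le_right hk) h)
  | not φ ih => exact not_congr (ih hφ hs hk h)
  | _ => exact hG.sat_atom_iff h trivial hφ hs

def dataWord (ℓ : L) (e : ℕ → D) (N : ℕ) : List (L × D) :=
  List.ofFn fun i : Fin N => (ℓ, e i)

section DataWord

variable (ℓ : L) (e : ℕ → D) (N : ℕ)

@[simp]
theorem length_dataWord : (dataWord ℓ e N).length = N :=
  List.length_ofFn

theorem get_dataWord (i : ℕ) (h : i < (dataWord ℓ e N).length) :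
    (dataWord ℓ e N).get ⟨i, h⟩ = (ℓ, e i) := by
  simp [dataWord]

theorem sat_dataWord_lab (a : L) (i : ℕ) (v : ℕ → ℕ) :
    Sat (dataWord ℓ e N) (lab a i) v ↔ v i < N ∧ ℓ = a := by
  simp only [Sat, get_dataWord, length_dataWord, exists_prop]

theorem sat_dataWord_dataEq (i j : ℕ) (v : ℕ → ℕ) :
    Sat (dataWord ℓ e N) (dataEq i j) v ↔ v i < N ∧ v j < N ∧ e (v i) = e (v j) := by
  simp only [Sat, get_dataWord, length_dataWord, exists_prop]

end DataWord

def PartialIso (d₁ d₂ : ℕ → ℕ) (p p' q q' : ℕ) : Prop :=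
  (p < p' ↔ q < q') ∧ (p' < p ↔ q' < q) ∧ (d₁ p = d₁ p' ↔ d₂ q = d₂ q')

namespace PartialIso

variable {d₁ d₂ : ℕ → ℕ} {p p' q q' : ℕ}

theorem refl (d₁ d₂ : ℕ → ℕ) (p q : ℕ) : PartialIso d₁ d₂ p p q q := by
  simp [PartialIso]

theorem symm (h : PartialIso d₁ d₂ p p' q q') : PartialIso d₁ d₂ p' p q' q :=
  ⟨h.2.1, h.1, eq_comm.trans (h.2.2.trans eq_comm)⟩

theorem comm (h : PartialIso d₁ d₂ p p' q q') : PartialIso d₂ d₁ q q' p p' :=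
  ⟨h.1.symm, h.2.1.symm, h.2.2.symm⟩

end PartialIso

theorem sat_atom_iff_of_partialIso {ℓ : L} {emb : ℕ → D} (hemb : Function.Injective emb)
    {N : ℕ} {d₁ d₂ v₁ v₂ : ℕ → ℕ} (hv₁ : ∀ i < 2, v₁ i < N) (hv₂ : ∀ i < 2, v₂ i < N)
    (hiso : PartialIso d₁ d₂ (v₁ 0) (v₁ 1) (v₂ 0) (v₂ 1)) {φ : FO L} (hat : φ.IsAtom)
    (hφ : φ.VarsLt 2) (hs : φ.NoSucc) :
    Sat (dataWord ℓ (emb ∘ d₁) N) φ v₁ ↔ Sat (dataWord ℓ (emb ∘ d₂) N) φ v₂ := by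
  have hpair : ∀ i < 2, ∀ j < 2, PartialIso d₁ d₂ (v₁ i) (v₁ j) (v₂ i) (v₂ j) := by
    intro i hi j hj
    interval_cases i <;> interval_cases j
    exacts [.refl .., hiso, hiso.symm, .refl ..]
  cases φ with
  | lab a i => simp only [sat_dataWord_lab, hv₁ i hφ, hv₂ i hφ, true_and]
  | eq i j =>
    have := hpair i hφ.1 j hφ.2
    simp only [Sat, PartialIso] at this ⊢
    omega
  | dataEq i j =>
    simp only [sat_dataWord_dataEq, hv₁ _ hφ.1, hv₁ _ hφ.2, hv₂ _ hφ.1, hv₂ _ hφ.2,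
      Function.comp_apply, hemb.eq_iff, true_and]
    exact (hpair i hφ.1 j hφ.2).2.2
  | lt i j => exact (hpair i hφ.1 j hφ.2).1
  | succ => exact hs.elim
  | exist | or | not => exact hat.elim

def adjSameData : FO L :=
  exist 0 (exist 1 (and (succ 0 1) (dataEq 0 1)))

theorem varsLt_two_adjSameData : (adjSameData : FO L).VarsLt 2 := by
  simp [adjSameData, VarsLt, FO.and]

theorem sat_dataWord_adjSameData (ℓ : L) (e : ℕ → D) (N : ℕ) (v : ℕ → ℕ) :
    Sat (dataWord ℓ e N) adjSameData v ↔ ∃ x, x + 1 < N ∧ e (x + 1) = e x := by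
  simp only [adjSameData, FO.and, Sat, not_or, not_not, get_dataWord, length_dataWord,
    Function.update_self, Function.update_of_ne zero_ne_one]
  constructor
  · rintro ⟨_, _, x, _, rfl, -, -, he⟩
    exact ⟨x, by omega, he⟩
  · rintro ⟨x, hx, he⟩
    exact ⟨x + 1, hx, x, by omega, rfl, hx, by omega, he⟩

end FO

/-- A data pattern on the positions `[0, N)` whose data classes are the pairs `{x, partner x}`
(see `datum`). -/
structure Pairing (N : ℕ) where
  partner : ℕ → ℕ
  partner_lt : ∀ x < N, partner x < N
  partner_partner : ∀ x < N, partner (partner x) = x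
  partner_ne : ∀ x < N, partner x ≠ x
  le_partner_add_two : ∀ x < N, x ≤ partner x + 2
  partner_le_add_two : ∀ x < N, partner x ≤ x + 2
  exists_lt_partner : ∀ x, x + 4 ≤ N → ∃ c, x ≤ c ∧ c < x + 4 ∧ c < partner c
  exists_partner_lt : ∀ x, x + 4 ≤ N → ∃ c, x ≤ c ∧ c < x + 4 ∧ partner c < c

namespace Pairing

variable {N : ℕ}

instance : CoeFun (Pairing N) fun _ => ℕ → ℕ :=
  ⟨Pairing.partner⟩

variable (π : Pairing N)

def datum (x : ℕ) : ℕ :=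
  min x (π x)

theorem datum_eq_datum_iff {x y : ℕ} (hx : x < N) (hy : y < N) :
    π.datum x = π.datum y ↔ y = x ∨ y = π x := by
  have hxx := π.partner_partner x hx
  have hyy := π.partner_partner y hy
  unfold datum
  grind

theorem exists_lt_partner_iff (b : Prop) {x : ℕ} (hx : x + 4 ≤ N) :
    ∃ c, x ≤ c ∧ c < x + 4 ∧ (c < π c ↔ b) := by
  by_cases hb : b
  · obtain ⟨c, hxc, hcx, hc⟩ := π.exists_lt_partner x hx
    exact ⟨c, hxc, hcx, iff_of_true hc hb⟩
  · obtain ⟨c, hxc, hcx, hc⟩ := π.exists_partner_lt x hx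
    exact ⟨c, hxc, hcx, iff_of_false (by omega) hb⟩

open FO

variable {P k p q p' : ℕ} {π₁ π₂ : Pairing N}

/-- Duplicator's answers stay within `7` of a pebble already placed, hence the factor `8`. -/
def Deep (N k x : ℕ) : Prop :=
  8 * k ≤ x ∧ x + 8 * k < N

variable (π₁ π₂) in
def AgreeOutside (P : ℕ) : Prop :=
  ∀ x < N, x < P ∨ P + 4 ≤ x → π₁ x = π₂ x

theorem AgreeOutside.symm (h : AgreeOutside π₁ π₂ P) : AgreeOutside π₂ π₁ P :=
  fun x hx hout => (h x hx hout).symm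

variable (π₁ π₂) in
/-- Duplicator's invariant for a pebble at `p` in the first string and `q` in the second, with
`k` rounds to go. -/
def Matches (k p q : ℕ) : Prop :=
  p < N ∧ q < N ∧ (p < π₁ p ↔ q < π₂ q) ∧ (p = q ∨ Deep N k p ∧ Deep N k q)

theorem Matches.symm (h : Matches π₁ π₂ k p q) : Matches π₂ π₁ k q p := by
  obtain ⟨hp, hq, hdir, heq | hdeep⟩ := h
  exacts [⟨hq, hp, hdir.symm, Or.inl heq.symm⟩, ⟨hq, hp, hdir.symm, Or.inr hdeep.symm⟩]

theorem Matches.of_succ (h : Matches π₁ π₂ (k + 1) p q) : Matches π₁ π₂ k p q := by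
  obtain ⟨hp, hq, hdir, hpos⟩ := h
  refine ⟨hp, hq, hdir, ?_⟩
  unfold Deep at hpos ⊢
  omega

theorem matches_self (hagree : AgreeOutside π₁ π₂ P) {x : ℕ} (hx : x < N)
    (hout : x < P ∨ P + 4 ≤ x) : Matches π₁ π₂ k x x :=
  ⟨hx, hx, by rw [hagree x hx hout], Or.inl rfl⟩

theorem Matches.eq_outside_or_deep (hblock : Deep N k P ∧ Deep N k (P + 3))
    (h : Matches π₁ π₂ k p q) : q = p ∧ (p < P ∨ P + 4 ≤ p) ∨ Deep N k p ∧ Deep N k q := by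
  obtain ⟨-, -, -, rfl | hdeep⟩ := h
  · by_cases hout : p < P ∨ P + 4 ≤ p
    · exact Or.inl ⟨rfl, hout⟩
    · unfold Deep at *
      omega
  · exact Or.inr hdeep

theorem partialIso_of_not_mem_class (hp : p < N) (hp' : p' < N) (hq : q < N) {q' : ℕ}
    (hq' : q' < N) (hsep : p' ≠ p ∧ p' ≠ π₁ p) (hsep' : q' ≠ q ∧ q' ≠ π₂ q)
    (hlt : p < p' ↔ q < q') (hgt : p' < p ↔ q' < q) :
    PartialIso π₁.datum π₂.datum p p' q q' := by
  refine ⟨hlt, hgt, ?_⟩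
  rw [π₁.datum_eq_datum_iff hp hp', π₂.datum_eq_datum_iff hq hq']
  tauto

theorem exists_matches_partner (hblock : Deep N (k + 1) P ∧ Deep N (k + 1) (P + 3))
    (hagree : AgreeOutside π₁ π₂ P) (h : Matches π₁ π₂ (k + 1) p q) :
    ∃ q', Matches π₁ π₂ k (π₁ p) q' ∧ PartialIso π₁.datum π₂.datum p (π₁ p) q q' := by
  have hpos := h.eq_outside_or_deep hblock
  obtain ⟨hp, hq, hdir, -⟩ := h
  have := π₁.partner_partner p hp
  have := π₂.partner_partner q hq
  have := π₁.partner_ne p hp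
  have := π₂.partner_ne q hq
  have := π₁.le_partner_add_two p hp
  have := π₁.partner_le_add_two p hp
  have := π₂.le_partner_add_two q hq
  have := π₂.partner_le_add_two q hq
  replace hpos : π₁ p = π₂ q ∨ Deep N k (π₁ p) ∧ Deep N k (π₂ q) := by
    rcases hpos with ⟨hqp, hout⟩ | ⟨hdp, hdq⟩
    · exact Or.inl (hqp ▸ hagree p hp hout)
    · unfold Deep at *
      omega
  refine ⟨π₂ q, ⟨π₁.partner_lt p hp, π₂.partner_lt q hq, by omega, hpos⟩, by omega, by omega, ?_⟩
  rw [π₁.datum_eq_datum_iff hp (π₁.partner_lt p hp), π₂.datum_eq_datum_iff hq (π₂.partner_lt q hq)]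
  tauto

theorem exists_answer_self (hagree : AgreeOutside π₁ π₂ P) (hp : p < N) (hq : q < N)
    (hp' : p' < N) (hout : p' < P ∨ P + 4 ≤ p') (hsep : p' ≠ p ∧ p' ≠ π₁ p)
    (hsep' : p' ≠ q ∧ p' ≠ π₂ q) (hlt : p < p' ↔ q < p') (hgt : p' < p ↔ p' < q) :
    ∃ q', Matches π₁ π₂ k p' q' ∧ PartialIso π₁.datum π₂.datum p p' q q' :=
  ⟨p', matches_self hagree hp' hout, partialIso_of_not_mem_class hp hp' hq hp' hsep hsep' hlt hgt⟩

theorem exists_answer_in_window (hp : p < N) (hq : q < N) (hp' : p' < N) (hdeep : Deep N k p')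
    (hsep : p' ≠ p ∧ p' ≠ π₁ p) {x : ℕ} (hx : x + 4 ≤ N)
    (hwin : ∀ c, x ≤ c → c < x + 4 →
      Deep N k c ∧ (c ≠ q ∧ c ≠ π₂ q) ∧ (p < p' ↔ q < c) ∧ (p' < p ↔ c < q)) :
    ∃ q', Matches π₁ π₂ k p' q' ∧ PartialIso π₁.datum π₂.datum p p' q q' := by
  obtain ⟨c, hxc, hcx, hdir⟩ := π₂.exists_lt_partner_iff (p' < π₁ p') hx
  obtain ⟨hc, hsep', hlt, hgt⟩ := hwin c hxc hcx
  exact ⟨c, ⟨hp', by omega, hdir.symm, Or.inr ⟨hdeep, hc⟩⟩,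
    partialIso_of_not_mem_class hp hp' hq (by omega) hsep hsep' hlt hgt⟩

/-- Duplicator's answer to a pebble moved to `p'`, the other pebble being at `p` and `q`. -/
theorem Matches.exists_answer (hblock : Deep N (k + 1) P ∧ Deep N (k + 1) (P + 3))
    (hagree : AgreeOutside π₁ π₂ P) (h : Matches π₁ π₂ (k + 1) p q) (hp' : p' < N) :
    ∃ q', Matches π₁ π₂ k p' q' ∧ PartialIso π₁.datum π₂.datum p p' q q' := by
  by_cases hpp : p' = p
  · subst hpp
    exact ⟨q, h.of_succ, .refl ..⟩
  by_cases hpart : p' = π₁ p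
  · subst hpart
    exact exists_matches_partner hblock hagree h
  have hsep : p' ≠ p ∧ p' ≠ π₁ p := ⟨hpp, hpart⟩
  have hpos := h.eq_outside_or_deep hblock
  obtain ⟨hp, hq, -, -⟩ := h
  have := π₂.le_partner_add_two q hq
  have := π₂.partner_le_add_two q hq
  unfold Deep at hblock
  rcases hpos with ⟨rfl, hout⟩ | ⟨hdp, hdq⟩
  · by_cases hout' : p' < P ∨ P + 4 ≤ p'
    · refine exists_answer_self hagree hp hp hp' hout' hsep ?_ Iff.rfl Iff.rfl
      rwa [← hagree _ hp hout]
    have hdeep : Deep N k p' := by unfold Deep; omega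
    rcases hout with hlt | hgt
    · exact exists_answer_in_window hp hp hp' hdeep hsep (x := P + 4) (by omega)
        fun c _ _ => by unfold Deep; omega
    · exact exists_answer_in_window hp hp hp' hdeep hsep (x := P - 4) (by omega)
        fun c _ _ => by unfold Deep; omega
  · unfold Deep at hdp hdq
    by_cases hdeep : Deep N k p'
    · rcases lt_or_gt_of_ne hpp with hlt | hgt
      · exact exists_answer_in_window hp hq hp' hdeep hsep (x := q - 7) (by omega)
          fun c _ _ => by unfold Deep; omega
      · exact exists_answer_in_window hp hq hp' hdeep hsep (x := q + 3) (by omega)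
          fun c _ _ => by unfold Deep; omega
    · unfold Deep at hdeep
      exact exists_answer_self hagree hp hq hp' (by omega) hsep (by omega) (by omega) (by omega)

variable (π₁ π₂) in
def GoodConfig (P k : ℕ) (v₁ v₂ : ℕ → ℕ) : Prop :=
  (Deep N k P ∧ Deep N k (P + 3)) ∧ Matches π₁ π₂ k (v₁ 0) (v₂ 0) ∧
    Matches π₁ π₂ k (v₁ 1) (v₂ 1) ∧ PartialIso π₁.datum π₂.datum (v₁ 0) (v₁ 1) (v₂ 0) (v₂ 1)

theorem GoodConfig.symm {v₁ v₂ : ℕ → ℕ} (h : GoodConfig π₁ π₂ P k v₁ v₂) :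
    GoodConfig π₂ π₁ P k v₂ v₁ :=
  ⟨h.1, h.2.1.symm, h.2.2.1.symm, h.2.2.2.comm⟩

theorem goodConfig_zero (hagree : AgreeOutside π₁ π₂ P) (hP : 0 < P)
    (hblock : Deep N k P ∧ Deep N k (P + 3)) :
    GoodConfig π₁ π₂ P k (fun _ => 0) (fun _ => 0) :=
  have h₀ := matches_self (k := k) hagree (by unfold Deep at hblock; omega) (Or.inl hP)
  ⟨hblock, h₀, h₀, .refl ..⟩

theorem GoodConfig.exists_update (hagree : AgreeOutside π₁ π₂ P) {v₁ v₂ : ℕ → ℕ}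
    (h : GoodConfig π₁ π₂ P (k + 1) v₁ v₂) {i : ℕ} (hi : i < 2) {p : ℕ} (hp : p < N) :
    ∃ q < N, GoodConfig π₁ π₂ P k (Function.update v₁ i p) (Function.update v₂ i q) := by
  obtain ⟨hblock, h₀, h₁, -⟩ := h
  have hblock' : Deep N k P ∧ Deep N k (P + 3) := by unfold Deep at *; omega
  interval_cases i
  · obtain ⟨q, hq, hiso⟩ := h₁.exists_answer hblock hagree hp
    exact ⟨q, hq.2.1, hblock', by simpa using hq, by simpa using h₁.of_succ,
      by simpa using hiso.symm⟩
  · obtain ⟨q, hq, hiso⟩ := h₀.exists_answer hblock hagree hp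
    exact ⟨q, hq.2.1, hblock', by simpa using h₀.of_succ, by simpa using hq, by simpa using hiso⟩

theorem twoPebbleStrategy {L D : Type} (ℓ : L) {emb : ℕ → D} (hemb : Function.Injective emb)
    (hagree : AgreeOutside π₁ π₂ P) :
    TwoPebbleStrategy (dataWord ℓ (emb ∘ π₁.datum) N) (dataWord ℓ (emb ∘ π₂.datum) N)
      (GoodConfig π₁ π₂ P) where
  sat_atom_iff h _ := by
    obtain ⟨-, h₀, h₁, hiso⟩ := h
    refine sat_atom_iff_of_partialIso hemb (fun i hi => ?_) (fun i hi => ?_) hiso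
    all_goals interval_cases i
    exacts [h₀.1, h₁.1, h₀.2.1, h₁.2.1]
  forth h i hi p hp := by
    simpa using h.exists_update hagree hi (by simpa using hp)
  back h i hi q hq := by
    obtain ⟨p, hp, h'⟩ := h.symm.exists_update hagree.symm hi (by simpa using hq)
    exact ⟨p, by simpa using hp, h'.symm⟩

def interleaved (n : ℕ) : Pairing (4 * n) where
  partner x := if x % 4 < 2 then x + 2 else x - 2
  partner_lt x hx := by split_ifs <;> omega
  partner_partner x hx := by split_ifs <;> omega
  partner_ne x hx := by split_ifs <;> omega
  le_partner_add_two x hx := by split_ifs <;> omega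
  partner_le_add_two x hx := by split_ifs <;> omega
  exists_lt_partner x hx := ⟨x + (4 - x % 4) % 4, by omega, by omega, by split_ifs <;> omega⟩
  exists_partner_lt x hx := ⟨x + (7 - x % 4) % 4, by omega, by omega, by split_ifs <;> omega⟩

def withAdjacentBlock (n m : ℕ) : Pairing (4 * n) where
  partner x :=
    if x / 4 = m then (if x % 2 = 0 then x + 1 else x - 1)
    else if x % 4 < 2 then x + 2 else x - 2
  partner_lt x hx := by split_ifs <;> omega
  partner_partner x hx := by split_ifs <;> omega
  partner_ne x hx := by split_ifs <;> omega
  le_partner_add_two x hx := by split_ifs <;> omega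
  partner_le_add_two x hx := by split_ifs <;> omega
  exists_lt_partner x hx := ⟨x + (4 - x % 4) % 4, by omega, by omega, by split_ifs <;> omega⟩
  exists_partner_lt x hx := ⟨x + (7 - x % 4) % 4, by omega, by omega, by split_ifs <;> omega⟩

theorem interleaved_apply_succ_ne (n x : ℕ) : interleaved n (x + 1) ≠ x := by
  simp only [interleaved]
  split_ifs <;> omega

theorem withAdjacentBlock_apply (n m : ℕ) : withAdjacentBlock n m (4 * m + 1) = 4 * m := by
  simp only [withAdjacentBlock]
  split_ifs <;> omega

theorem agreeOutside_withAdjacentBlock (n m : ℕ) :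
    AgreeOutside (withAdjacentBlock n m) (interleaved n) (4 * m) := by
  intro x _ hout
  simp only [withAdjacentBlock, interleaved, if_neg (show x / 4 ≠ m by omega)]

theorem sat_adjSameData_iff {L D : Type} {N : ℕ} (π : Pairing N) (ℓ : L) {emb : ℕ → D}
    (hemb : Function.Injective emb) (v : ℕ → ℕ) :
    Sat (dataWord ℓ (emb ∘ π.datum) N) adjSameData v ↔ ∃ x, x + 1 < N ∧ π (x + 1) = x := by
  rw [sat_dataWord_adjSameData]
  refine exists_congr fun x => and_congr_right fun hx => ?_
  rw [Function.comp_apply, Function.comp_apply, hemb.eq_iff,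
    π.datum_eq_datum_iff hx (by omega)]
  omega

end Pairing

theorem FO2_lt_strictly_below_FO2_lt_succ_general (L D : Type) [Nonempty L]
    [Infinite D] :
    {S : Set (List (L × D)) | ∃ φ : FO L, FO.VarsLt 2 φ ∧ FO.NoSucc φ ∧ FO.Lang D φ = S} ⊂
    {S : Set (List (L × D)) | ∃ φ : FO L, FO.VarsLt 2 φ ∧ FO.Lang D φ = S} := by
  refine ⟨fun S ⟨φ, hφ, _, hS⟩ => ⟨φ, hφ, hS⟩, fun hsub => ?_⟩
  obtain ⟨ψ, hψ, hψs, hψS⟩ := hsub ⟨FO.adjSameData, FO.varsLt_two_adjSameData, rfl⟩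
  set k := ψ.qrank
  -- strings of length `16 (k + 1)` that differ only on the block `[8 (k + 1), 8 (k + 1) + 4)`
  have hagree := Pairing.agreeOutside_withAdjacentBlock (4 * (k + 1)) (2 * (k + 1))
  let ℓ : L := Classical.arbitrary L
  let emb := Infinite.natEmbedding D
  have hsat := (Pairing.twoPebbleStrategy ℓ emb.injective hagree).sat_iff hψ hψs le_rfl
    (Pairing.goodConfig_zero hagree (by omega) (by unfold Pairing.Deep; omega))
  have hlang : ∀ w, FO.Sat w ψ (fun _ => 0) ↔ FO.Sat w FO.adjSameData (fun _ => 0) :=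
    Set.ext_iff.1 hψS
  simp only [hlang, Pairing.sat_adjSameData_iff _ ℓ emb.injective] at hsat
  obtain ⟨x, -, hx⟩ := hsat.1 ⟨4 * (2 * (k + 1)), by omega, Pairing.withAdjacentBlock_apply ..⟩
  exact Pairing.interleaved_apply_succ_ne _ x hx

/-- every data language definable in FO²(∼,<) is definable in
FO²(∼,<,+1), but not conversely: some FO²(∼,<,+1)-definable language is not
FO²(∼,<)-definable.  Hence FO²(∼,<) ⊊ FO²(∼,<,+1) as classes of data
languages. -/
theorem FO2_lt_strictly_below_FO2_lt_succ (L D : Type) [Finite L] [Nonempty L]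
    [Infinite D] :
    {S : Set (List (L × D)) | ∃ φ : FO L, FO.VarsLt 2 φ ∧ FO.NoSucc φ ∧ FO.Lang D φ = S} ⊂
    {S : Set (List (L × D)) | ∃ φ : FO L, FO.VarsLt 2 φ ∧ FO.Lang D φ = S} :=
  FO2_lt_strictly_below_FO2_lt_succ_general L D
end

section
/- Every data language definable in two-variable first-order logic FO²(∼,<,+1) over data strings is definable in existential monadic second-order logic EMSO²(∼,<,+1), and the inclusion is strict. -/
/-- Syntax of monadic second-order logic over data strings, with label
predicates, position equality, data equality `∼`, order `<`, successor `+1`,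
set membership and both first- and second-order quantification. -/
inductive MSO (L : Type) : Type
  | lab : L → ℕ → MSO L          -- `a(x)`
  | eq : ℕ → ℕ → MSO L           -- `x = y`
  | dataEq : ℕ → ℕ → MSO L       -- `x ∼ y`
  | lt : ℕ → ℕ → MSO L           -- `x < y`
  | succ : ℕ → ℕ → MSO L         -- `x = y + 1`
  | mem : ℕ → ℕ → MSO L          -- `x ∈ X`
  | exist : ℕ → MSO L → MSO L    -- `∃ x. φ` (first order)
  | existS : ℕ → MSO L → MSO L   -- `∃ X. φ` (second order, over sets of positions)
  | or : MSO L → MSO L → MSO L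
  | not : MSO L → MSO L

namespace MSO

variable {L D : Type}

/-- Satisfaction in a data string `w : List (L × D)` under a first-order
valuation (variables ↦ positions) and a second-order valuation
(set variables ↦ sets of positions). -/
def Sat (w : List (L × D)) : MSO L → (ℕ → ℕ) → (ℕ → Set ℕ) → Prop
  | lab a x, v, _ => ∃ h : v x < w.length, (w.get ⟨v x, h⟩).1 = a
  | eq x y, v, _ => v x = v y
  | dataEq x y, v, _ => ∃ (hx : v x < w.length) (hy : v y < w.length),
      (w.get ⟨v x, hx⟩).2 = (w.get ⟨v y, hy⟩).2
  | lt x y, v, _ => v x < v y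
  | succ x y, v, _ => v x = v y + 1
  | mem x X, v, V => v x ∈ V X
  | exist n φ, v, V => ∃ p, p < w.length ∧ Sat w φ (Function.update v n p) V
  | existS n φ, v, V => ∃ S : Set ℕ, (∀ p ∈ S, p < w.length) ∧
      Sat w φ v (Function.update V n S)
  | or φ ψ, v, V => Sat w φ v V ∨ Sat w ψ v V
  | not φ, v, V => ¬ Sat w φ v V

/-- The data language defined by a formula (over data domain `D`). -/
def Lang (D : Type) (φ : MSO L) : Set (List (L × D)) :=
  {w | Sat w φ (fun _ => 0) (fun _ => ∅)}

def and (φ ψ : MSO L) : MSO L := not (or (not φ) (not ψ))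

def imp (φ ψ : MSO L) : MSO L := or (not φ) ψ

def all (n : ℕ) (φ : MSO L) : MSO L := not (exist n (not φ))

def allS (n : ℕ) (φ : MSO L) : MSO L := not (existS n (not φ))

/-- All first-order variables of the formula have index `< n`
(set variables are unrestricted). -/
def FOVarsLt (n : ℕ) : MSO L → Prop
  | lab _ x => x < n
  | eq x y => x < n ∧ y < n
  | dataEq x y => x < n ∧ y < n
  | lt x y => x < n ∧ y < n
  | succ x y => x < n ∧ y < n
  | mem x _ => x < n
  | exist m φ => m < n ∧ FOVarsLt n φ
  | existS _ φ => FOVarsLt n φ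
  | or φ ψ => FOVarsLt n φ ∧ FOVarsLt n ψ
  | not φ => FOVarsLt n φ

/-- The formula has no second-order quantifier. -/
def NoSetQuant : MSO L → Prop
  | existS _ _ => False
  | exist _ φ => NoSetQuant φ
  | or φ ψ => NoSetQuant φ ∧ NoSetQuant ψ
  | not φ => NoSetQuant φ
  | _ => True

/-- The formula is purely first order: no set quantifiers and no membership
atoms. -/
def IsFirstOrder : MSO L → Prop
  | existS _ _ => False
  | mem _ _ => False
  | exist _ φ => IsFirstOrder φ
  | or φ ψ => IsFirstOrder φ ∧ IsFirstOrder ψ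
  | not φ => IsFirstOrder φ
  | _ => True

/-- The formula does not use the order predicate `<`. -/
def NoLt : MSO L → Prop
  | lt _ _ => False
  | exist _ φ => NoLt φ
  | existS _ φ => NoLt φ
  | or φ ψ => NoLt φ ∧ NoLt ψ
  | not φ => NoLt φ
  | _ => True

/-- The formula does not use the successor predicate `+1`. -/
def NoSucc : MSO L → Prop
  | succ _ _ => False
  | exist _ φ => NoSucc φ
  | existS _ φ => NoSucc φ
  | or φ ψ => NoSucc φ ∧ NoSucc ψ
  | not φ => NoSucc φ
  | _ => True

end MSO

/-- A formula is in EMSO² iff it is a block of existential second-order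
quantifiers followed by a two-variable first-order formula (which may mention
the quantified set variables). -/
inductive IsEMSO2 {L : Type} : MSO L → Prop
  | base : ∀ φ : MSO L, MSO.NoSetQuant φ → MSO.FOVarsLt 2 φ → IsEMSO2 φ
  | step : ∀ (n : ℕ) (φ : MSO L), IsEMSO2 φ → IsEMSO2 (MSO.existS n φ)

/-!
An FO² formula is an EMSO² formula with an empty block of set quantifiers. The even-length words
separate the two classes. In EMSO² one guesses the set of even positions and checks with the
successor relation that it contains the first position, alternates and misses the last one.
In FO² nothing of the kind is possible: on constant words a two-variable formula of threshold `t`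
only sees the positions of its two variables and their distances to each other and to the ends
of the word, capped at `t`, so by a two-pebble Ehrenfeucht–Fraïssé argument it cannot separate
the lengths `2 t + 2` and `2 t + 3`.
-/

namespace MSO

variable {L D : Type}

lemma sat_and {w : List (L × D)} {φ ψ : MSO L} {v : ℕ → ℕ} {V : ℕ → Set ℕ} :
    Sat w (φ.and ψ) v V ↔ Sat w φ v V ∧ Sat w ψ v V := by
  simp only [MSO.and, Sat, not_or, not_not]

lemma sat_imp {w : List (L × D)} {φ ψ : MSO L} {v : ℕ → ℕ} {V : ℕ → Set ℕ} :
    Sat w (φ.imp ψ) v V ↔ (Sat w φ v V → Sat w ψ v V) := by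
  simp only [MSO.imp, Sat, imp_iff_not_or]

def iff (φ ψ : MSO L) : MSO L := (φ.imp ψ).and (ψ.imp φ)

lemma sat_iff {w : List (L × D)} {φ ψ : MSO L} {v : ℕ → ℕ} {V : ℕ → Set ℕ} :
    Sat w (φ.iff ψ) v V ↔ (Sat w φ v V ↔ Sat w ψ v V) := by
  simp only [MSO.iff, sat_and, sat_imp, iff_def]

lemma sat_all {w : List (L × D)} {n : ℕ} {φ : MSO L} {v : ℕ → ℕ} {V : ℕ → Set ℕ} :
    Sat w (all n φ) v V ↔ ∀ p < w.length, Sat w φ (Function.update v n p) V := by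
  simp only [MSO.all, Sat, not_exists, not_and, not_not]

lemma IsFirstOrder.noSetQuant {φ : MSO L} (h : IsFirstOrder φ) : NoSetQuant φ := by
  induction φ <;> simp_all [IsFirstOrder, NoSetQuant]

/-- One quantifier round of the two-pebble game needs similarity up to `2 t + 2` to keep
similarity up to `t`. -/
def threshold : MSO L → ℕ
  | exist _ φ => 2 * threshold φ + 2
  | existS _ φ => threshold φ
  | or φ ψ => max (threshold φ) (threshold ψ)
  | not φ => threshold φ
  | _ => 2

lemma two_le_threshold (φ : MSO L) : 2 ≤ threshold φ := by
  induction φ <;> simp only [threshold] <;> omega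

def PebbleEquiv (t n n' : ℕ) (v v' : ℕ → ℕ) : Prop :=
  ∀ x < 2, v x < n ∧ v' x < n' ∧ min (v x) t = min (v' x) t ∧
    min (n - v x) t = min (n' - v' x) t ∧ ∀ y < 2, min (v x - v y) t = min (v' x - v' y) t

namespace PebbleEquiv

variable {t n n' : ℕ} {v v' : ℕ → ℕ}

lemma symm (h : PebbleEquiv t n n' v v') : PebbleEquiv t n' n v' v := fun x hx =>
  have ⟨h₁, h₂, h₃, h₄, h₅⟩ := h x hx
  ⟨h₂, h₁, h₃.symm, h₄.symm, fun y hy => (h₅ y hy).symm⟩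

lemma mono {s : ℕ} (h : PebbleEquiv t n n' v v') (hst : s ≤ t) : PebbleEquiv s n n' v v' :=
  fun x hx =>
  have ⟨h₁, h₂, h₃, h₄, h₅⟩ := h x hx
  ⟨h₁, h₂, by omega, by omega, fun y hy => have := h₅ y hy; by omega⟩

end PebbleEquiv

/-- Copy the offset of `r` from `q` if it is at most `t`, else its offset from an end of the
word if that is at most `t`, else go `t + 1` past `q'` on the side where `r` lies. -/
lemma exists_similar_position {t n q n' q' r : ℕ}
    (hq : min q (2 * t + 2) = min q' (2 * t + 2))
    (hnq : min (n - q) (2 * t + 2) = min (n' - q') (2 * t + 2)) (hq' : q' < n') (hr : r < n) :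
    ∃ r' < n', min r t = min r' t ∧ min (n - r) t = min (n' - r') t ∧
      min (r - q) t = min (r' - q') t ∧ min (q - r) t = min (q' - r') t := by
  refine ⟨if q ≤ r ∧ r - q ≤ t then q' + (r - q)
     else if r ≤ q ∧ q - r ≤ t then q' - (q - r)
     else if r ≤ t then r
     else if n - r ≤ t then n' - (n - r)
     else if r < q then q' - (t + 1) else q' + (t + 1), ?_, ?_, ?_, ?_, ?_⟩ <;>
    split_ifs <;> omega

lemma PebbleEquiv.forth {t n n' m r : ℕ} {v v' : ℕ → ℕ}
    (h : PebbleEquiv (2 * t + 2) n n' v v') (hm : m < 2) (hr : r < n) :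
    ∃ r' < n', PebbleEquiv t n n' (Function.update v m r) (Function.update v' m r') := by
  obtain ⟨hq, hq', hstart₂, hend₂, -⟩ := h (1 - m) (by omega)
  obtain ⟨r', hr', hr₀, hr₁, hr₂, hr₃⟩ := exists_similar_position hstart₂ hend₂ hq' hr
  obtain ⟨-, -, hstart, hend, -⟩ := (h.mono (by omega : t ≤ 2 * t + 2)) (1 - m) (by omega)
  have hother : 1 - m ≠ m := by omega
  have hcases : ∀ z < 2, z = m ∨ z = 1 - m := by omega
  refine ⟨r', hr', fun x hx => ?_⟩
  rcases hcases x hx with hxm | hxm <;> subst x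
  · simp only [Function.update_self]
    refine ⟨hr, hr', hr₀, hr₁, fun y hy => ?_⟩
    rcases hcases y hy with hym | hym <;> subst y
    · simp
    · simpa only [Function.update_self, Function.update_of_ne hother] using hr₂
  · simp only [Function.update_of_ne hother]
    refine ⟨hq, hq', hstart, hend, fun y hy => ?_⟩
    rcases hcases y hy with hym | hym <;> subst y
    · simpa only [Function.update_self] using hr₃
    · simp only [Function.update_of_ne hother, Nat.sub_self]

lemma sat_replicate_iff_of_pebbleEquiv (c : L × D) {φ : MSO L} (hfo : IsFirstOrder φ)
    (h2 : FOVarsLt 2 φ) {t n n' : ℕ} (ht : threshold φ ≤ t) {v v' : ℕ → ℕ}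
    (h : PebbleEquiv t n n' v v') (V : ℕ → Set ℕ) :
    Sat (List.replicate n c) φ v V ↔ Sat (List.replicate n' c) φ v' V := by
  induction φ generalizing t v v' with
  | lab b x =>
    obtain ⟨hx, hx', -⟩ := h x h2
    simp [Sat, hx, hx']
  | eq x y | lt x y | succ x y =>
    have : 2 ≤ t := (two_le_threshold _).trans ht
    obtain ⟨-, -, -, -, hxy⟩ := h x h2.1
    obtain ⟨-, -, -, -, hyx⟩ := h y h2.2
    have := hxy y h2.2
    have := hyx x h2.1
    simp only [Sat]
    omega
  | dataEq x y =>
    obtain ⟨hx, hx', -⟩ := h x h2.1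
    obtain ⟨hy, hy', -⟩ := h y h2.2
    simp [Sat, hx, hx', hy, hy']
  | mem | existS => exact (hfo : False).elim
  | exist m ψ ih =>
    obtain ⟨hm, h2⟩ := h2
    have h := h.mono ht
    simp only [Sat, List.length_replicate]
    constructor
    · rintro ⟨r, hr, hψ⟩
      obtain ⟨r', hr', h'⟩ := h.forth hm hr
      exact ⟨r', hr', (ih hfo h2 le_rfl h').1 hψ⟩
    · rintro ⟨r', hr', hψ⟩
      obtain ⟨r, hr, h'⟩ := h.symm.forth hm hr'
      exact ⟨r, hr, (ih hfo h2 le_rfl h'.symm).2 hψ⟩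
  | or φ ψ ihφ ihψ =>
    exact or_congr (ihφ hfo.1 h2.1 (le_of_max_le_left ht) h)
      (ihψ hfo.2 h2.2 (le_of_max_le_right ht) h)
  | not φ ih => exact not_congr (ih hfo h2 ht h)

lemma not_lang_eq_even_length (c : L × D) {φ : MSO L} (hfo : IsFirstOrder φ)
    (h2 : FOVarsLt 2 φ) : Lang D φ ≠ {w | Even w.length} := by
  intro hφ
  set t := threshold φ
  have h : PebbleEquiv t (2 * t + 2) (2 * t + 3) (fun _ => 0) (fun _ => 0) := by
    intro _ _
    refine ⟨?_, ?_, rfl, ?_, fun _ _ => rfl⟩ <;> dsimp only <;> omega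
  have hsat := sat_replicate_iff_of_pebbleEquiv c hfo h2 le_rfl h (fun _ => ∅)
  have heven : List.replicate (2 * t + 2) c ∈ Lang D φ := by
    rw [hφ]; simp [Nat.even_add_one]
  have hodd : List.replicate (2 * t + 3) c ∉ Lang D φ := by
    rw [hφ]; simp [Nat.even_add_one]
  exact hodd (hsat.1 heven)

def alternatingMarking : MSO L :=
  (all 0 ((exist 1 (succ 0 1)).not.imp (mem 0 0))).and <|
    (all 0 (all 1 ((succ 1 0).imp ((mem 0 0).iff (mem 1 0)).not))).and
      (all 0 ((exist 1 (succ 1 0)).not.imp (mem 0 0).not))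

def evenLength : MSO L := existS 0 alternatingMarking

lemma sat_alternatingMarking {w : List (L × D)} {v : ℕ → ℕ} {V : ℕ → Set ℕ} :
    Sat w alternatingMarking v V ↔ (0 < w.length → 0 ∈ V 0) ∧
      (∀ p, p + 1 < w.length → (p + 1 ∈ V 0 ↔ p ∉ V 0)) ∧
      (0 < w.length → w.length - 1 ∉ V 0) := by
  simp only [alternatingMarking, sat_and, sat_imp, sat_all, sat_iff, Sat, Function.update_self,
    Function.update_of_ne zero_ne_one]
  constructor
  · rintro ⟨hfirst, hstep, hlast⟩
    refine ⟨fun hn => hfirst 0 hn (by omega), fun p hp => ?_,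
      fun hn => hlast _ (by omega) (by omega)⟩
    have := hstep p (by omega) (p + 1) hp rfl
    tauto
  · rintro ⟨hfirst, hstep, hlast⟩
    refine ⟨fun p hp hpred => ?_, fun p _ q hq hqp => ?_, fun p hp hsucc => ?_⟩
    · obtain rfl : p = 0 := by
        by_contra
        exact hpred ⟨p - 1, by omega, by omega⟩
      exact hfirst hp
    · subst hqp
      have := hstep p hq
      tauto
    · obtain rfl : p = w.length - 1 := by
        by_contra
        exact hsucc ⟨p + 1, by omega, rfl⟩
      exact hlast (by omega)

lemma even_iff_exists_alternating (n : ℕ) :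
    Even n ↔ ∃ S : Set ℕ, (∀ p ∈ S, p < n) ∧ (0 < n → 0 ∈ S) ∧
      (∀ p, p + 1 < n → (p + 1 ∈ S ↔ p ∉ S)) ∧ (0 < n → n - 1 ∉ S) := by
  constructor
  · intro hn
    refine ⟨{p | p < n ∧ Even p}, fun p hp => hp.1, fun h => ⟨h, Even.zero⟩,
      fun p hp => ?_, fun h ⟨_, hodd⟩ => ?_⟩
    · simp [hp, Nat.even_add_one, (by omega : p < n)]
    · obtain ⟨m, rfl⟩ : ∃ m, n = m + 1 := ⟨n - 1, by omega⟩
      exact Nat.even_add_one.1 hn (by simpa using hodd)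
  · rintro ⟨S, -, hfirst, hstep, hlast⟩
    have hparity : ∀ p < n, (p ∈ S ↔ Even p) := by
      intro p hp
      induction p with
      | zero => simpa using hfirst hp
      | succ p ih => rw [hstep p hp, ih (by omega), Nat.even_add_one]
    rcases Nat.eq_zero_or_pos n with rfl | hn
    · exact Even.zero
    · obtain ⟨m, rfl⟩ : ∃ m, n = m + 1 := ⟨n - 1, by omega⟩
      have := hparity m (by omega)
      simp_all [Nat.even_add_one]

lemma lang_evenLength : Lang D (evenLength (L := L)) = {w | Even w.length} := by
  ext w
  simp only [Lang, evenLength, Set.mem_ofPred_eq, Sat, sat_alternatingMarking,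
    Function.update_self, even_iff_exists_alternating]

lemma isEMSO2_evenLength : IsEMSO2 (evenLength (L := L)) :=
  .step 0 _ (.base _ (by simp [alternatingMarking, MSO.iff, MSO.and, MSO.imp, all, NoSetQuant])
    (by simp [alternatingMarking, MSO.iff, MSO.and, MSO.imp, all, FOVarsLt]))

end MSO

theorem FO2_strictly_below_EMSO2_general (L D : Type) [Nonempty L] [Infinite D] :
    {S : Set (List (L × D)) | ∃ φ : MSO L,
        MSO.IsFirstOrder φ ∧ MSO.FOVarsLt 2 φ ∧ MSO.Lang D φ = S} ⊂
    {S : Set (List (L × D)) | ∃ φ : MSO L, IsEMSO2 φ ∧ MSO.Lang D φ = S} := by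
  refine Set.ssubset_iff_subset_ne.2 ⟨?_, fun h => ?_⟩
  · rintro S ⟨φ, hfo, h2, rfl⟩
    exact ⟨φ, .base φ hfo.noSetQuant h2, rfl⟩
  · have heven : {w : List (L × D) | Even w.length} ∈
        {S | ∃ φ : MSO L, IsEMSO2 φ ∧ MSO.Lang D φ = S} :=
      ⟨MSO.evenLength, MSO.isEMSO2_evenLength, MSO.lang_evenLength⟩
    obtain ⟨φ, hfo, h2, hφ⟩ := h ▸ heven
    exact MSO.not_lang_eq_even_length (Classical.arbitrary (L × D)) hfo h2 hφ

/-- every FO²(∼,<,+1)-definable data language is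
EMSO²(∼,<,+1)-definable, and the inclusion is strict. -/
theorem FO2_strictly_below_EMSO2 (L D : Type) [Finite L] [Nonempty L] [Infinite D] :
    {S : Set (List (L × D)) | ∃ φ : MSO L,
        MSO.IsFirstOrder φ ∧ MSO.FOVarsLt 2 φ ∧ MSO.Lang D φ = S} ⊂
    {S : Set (List (L × D)) | ∃ φ : MSO L, IsEMSO2 φ ∧ MSO.Lang D φ = S} :=
  FO2_strictly_below_EMSO2_general L D
end
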